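/- arXiv:math/0506059 — 7 statements merged into one kernel-verified Lean document; each statement's English description precedes it below -/
import Mathlib

section
/- Let $\theta\in\mathbb R$, $t=\sin\theta$, $s=\cos\theta$, and define the infinite real matrix $\mathsf C(\theta)$ indexed by $\mathbb N\times\mathbb N$ by: $\mathsf C(\theta)_{0,j}=t^{j}s$ for $j\geq 0$; for $i\geq 1$: $\mathsf C(\theta)_{i,i-1}=-t$, $\mathsf C(\theta)_{i,j}=t^{j-i}s^2$ for $j\geq i$, and $\mathsf C(\theta)_{i,j}=0$ for $j<i-1$. Then the transpose satisfies $\mathsf C(\theta)^{\top}\mathsf C(\theta)=1_{\mathbb N}$, where the matrix product is entrywise given by absolutely convergent series. -/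
/-- The "shifting rotation" matrix `C(θ)`: row 0 is `(s, ts, t²s, …)`,
and for `i ≥ 1` the row is `(0,…,0,-t, s², ts², t²s², …)` with `-t` in column `i-1`. -/
noncomputable def Cmat (θ : ℝ) (i j : ℕ) : ℝ :=
  if i = 0 then (Real.sin θ) ^ j * Real.cos θ
  else if j + 1 = i then -(Real.sin θ)
  else if i ≤ j then (Real.sin θ) ^ (j - i) * (Real.cos θ) ^ 2
  else 0

/-!
Every column of `C(θ)` is finitely supported (column `i` vanishes below row `i + 1`), so all the
series are finite sums. Below row `1` the matrix is shift invariant, `C_{j+2,i+1} = C_{j+1,i}`,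
and rows `0, 1` of columns `i + 1` are `t` resp. `s` times row `0` of column `i`. Since
`t² + s² = 1`, the Gram entry `(i + 1, k + 1)` therefore equals the Gram entry `(i, k)`, which
reduces everything to column `0 = (s, -t, 0, 0, …)`, orthogonal to all later columns.
-/

open Finset Real

section Cmat

variable (θ : ℝ)

lemma Cmat_eq_zero_of_succ_lt {i j : ℕ} (h : i + 1 < j) : Cmat θ j i = 0 := by
  simp only [Cmat]
  rw [if_neg (by omega), if_neg (by omega), if_neg (by omega)]

lemma Cmat_succ_succ (j i : ℕ) : Cmat θ (j + 2) (i + 1) = Cmat θ (j + 1) i := by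
  have h : i + 1 - (j + 2) = i - (j + 1) := by omega
  simp only [Cmat, h, Nat.add_eq_zero_iff, add_left_inj, OfNat.ofNat_ne_zero, one_ne_zero,
    and_false, if_false]
  split_ifs <;> first | rfl | omega

lemma Cmat_zero_zero : Cmat θ 0 0 = cos θ := by simp [Cmat]

lemma Cmat_one_zero : Cmat θ 1 0 = -sin θ := by simp [Cmat]

lemma Cmat_zero_succ (k : ℕ) : Cmat θ 0 (k + 1) = sin θ * Cmat θ 0 k := by
  simp only [Cmat, ↓reduceIte, pow_succ]
  ring

lemma Cmat_one_succ (k : ℕ) : Cmat θ 1 (k + 1) = cos θ * Cmat θ 0 k := by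
  simp only [Cmat, if_neg one_ne_zero, if_neg (by omega : k + 1 + 1 ≠ 1),
    if_pos (by omega : 1 ≤ k + 1), Nat.add_sub_cancel, ↓reduceIte]
  ring

lemma sum_range_two_Cmat_mul_succ (i k : ℕ) :
    ∑ j ∈ range 2, Cmat θ j (i + 1) * Cmat θ j (k + 1) = Cmat θ 0 i * Cmat θ 0 k := by
  rw [sum_range_succ, sum_range_one, Cmat_zero_succ, Cmat_zero_succ, Cmat_one_succ,
    Cmat_one_succ]
  linear_combination Cmat θ 0 i * Cmat θ 0 k * sin_sq_add_cos_sq θ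

lemma hasSum_Cmat_zero_mul (k : ℕ) :
    HasSum (fun j ↦ Cmat θ j 0 * Cmat θ j k) (if 0 = k then 1 else 0) := by
  have hsupp : ∀ j ∉ range 2, Cmat θ j 0 * Cmat θ j k = 0 := fun j hj ↦ by
    rw [Cmat_eq_zero_of_succ_lt θ (by simpa using hj), zero_mul]
  suffices ∑ j ∈ range 2, Cmat θ j 0 * Cmat θ j k = if 0 = k then 1 else 0 from
    this ▸ hasSum_sum_of_ne_finset_zero hsupp
  rw [sum_range_succ, sum_range_one, Cmat_zero_zero, Cmat_one_zero]
  cases k with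
  | zero =>
    rw [Cmat_zero_zero, Cmat_one_zero, if_pos rfl]
    linear_combination cos_sq_add_sin_sq θ
  | succ k =>
    rw [Cmat_zero_succ, Cmat_one_succ, if_neg (Nat.zero_ne_add_one k)]
    ring

lemma hasSum_Cmat_mul_succ_succ {i k : ℕ} {a : ℝ}
    (h : HasSum (fun j ↦ Cmat θ j i * Cmat θ j k) a) :
    HasSum (fun j ↦ Cmat θ j (i + 1) * Cmat θ j (k + 1)) a := by
  rw [← hasSum_nat_add_iff' 2, sum_range_two_Cmat_mul_succ]
  rw [← hasSum_nat_add_iff' 1, sum_range_one] at h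
  simpa only [Cmat_succ_succ] using h

end Cmat

/-- `C(θ)ᵀ C(θ) = 1`: entrywise, the series `∑_j C(θ)_{j,i} C(θ)_{j,k}`
converges (absolutely) to `δ_{i,k}`. -/
theorem Cmat_transpose_mul_self (θ : ℝ) (i k : ℕ) :
    HasSum (fun j : ℕ => Cmat θ j i * Cmat θ j k) (if i = k then 1 else 0) := by
  induction i generalizing k with
  | zero => exact hasSum_Cmat_zero_mul θ k
  | succ i ih =>
    cases k with
    | zero =>
      simpa only [mul_comm, eq_comm] using hasSum_Cmat_zero_mul θ (i + 1)
    | succ k =>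
      simpa only [add_left_inj] using hasSum_Cmat_mul_succ_succ θ (ih k)
end

section
/- With $\mathsf C(\theta)$ as above ($t=\sin\theta$, $s=\cos\theta$), the product in the other order satisfies $\mathsf C(\theta)\mathsf C(\theta)^{\top}=1_{\mathbb N}-(\delta_{t,1}+\delta_{t,-1})\mathbf e_{0,0}$, i.e. it equals the identity matrix when $|t|<1$, and equals the identity minus the $(0,0)$ matrix unit when $t=\pm1$. -/
/-!
Write `t = sin θ`, `s = cos θ`. Beyond its diagonal every row of `C(θ)` is geometric with
ratio `t`, and row `k ≥ 1` vanishes before column `k - 1`. So the product of rows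
`i ≤ k` is one isolated term `-t · C(θ)ᵢ,ₖ₋₁` plus the tail `C(θ)ᵢₖ · ∑ s² t²ᵐ`. The series
`∑ s² t²ᵐ` sums to `1` when `|t| < 1` and to `0` when `s = 0`; for `k ≥ 1` the two pieces
cancel, or add up to `t² + s² = 1` when `i = k`, while for `i = k = 0` the tail is all there
is.
-/

open Finset

namespace Cmat

variable (θ : ℝ)

lemma zero_left (j : ℕ) : Cmat θ 0 j = Real.sin θ ^ j * Real.cos θ := by
  simp [Cmat]

lemma succ_self (i : ℕ) : Cmat θ (i + 1) (i + 1) = Real.cos θ ^ 2 := by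
  simp [Cmat]

lemma succ_left_self (i : ℕ) : Cmat θ (i + 1) i = -Real.sin θ := by
  simp [Cmat]

lemma eq_zero_of_succ_lt {i j : ℕ} (h : j + 1 < i) : Cmat θ i j = 0 := by
  rw [Cmat, if_neg (by omega), if_neg (by omega), if_neg (by omega)]

lemma add_of_le {i j : ℕ} (h : i ≤ j) (m : ℕ) :
    Cmat θ i (j + m) = Cmat θ i j * Real.sin θ ^ m := by
  unfold Cmat
  split_ifs <;> first | omega | (rw [show j + m - i = j - i + m by omega]; ring) | ring

lemma eq_zero_of_cos_eq_zero {θ : ℝ} (hc : Real.cos θ = 0) {i j : ℕ} (h : i ≤ j) :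
    Cmat θ i j = 0 := by
  unfold Cmat
  split_ifs <;> first | omega | simp [hc]

end Cmat

lemma hasSum_cos_sq_mul_sin_sq_pow (θ : ℝ) :
    HasSum (fun m : ℕ => Real.cos θ ^ 2 * (Real.sin θ ^ 2) ^ m)
      (if Real.sin θ = 1 ∨ Real.sin θ = -1 then 0 else 1) := by
  split_ifs with h
  · simp [Real.cos_eq_zero_iff_sin_eq.mpr h]
  · have hc : 0 < Real.cos θ ^ 2 :=
      sq_pos_of_ne_zero (mt Real.cos_eq_zero_iff_sin_eq.mp h)
    have hs : Real.sin θ ^ 2 < 1 := by linarith [Real.sin_sq_add_cos_sq θ]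
    have := (hasSum_geometric_of_lt_one (sq_nonneg _) hs).mul_left (Real.cos θ ^ 2)
    rwa [← Real.cos_sq' θ, mul_inv_cancel₀ hc.ne'] at this

lemma hasSum_Cmat_mul_Cmat_succ (θ : ℝ) {i k : ℕ} (hik : i ≤ k + 1) :
    HasSum (fun j : ℕ => Cmat θ i j * Cmat θ (k + 1) j)
      (Cmat θ i (k + 1) * (if Real.sin θ = 1 ∨ Real.sin θ = -1 then 0 else 1) -
        Real.sin θ * Cmat θ i k) := by
  have tail : HasSum (fun m : ℕ => Cmat θ i (m + (k + 1)) * Cmat θ (k + 1) (m + (k + 1)))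
      (Cmat θ i (k + 1) * (if Real.sin θ = 1 ∨ Real.sin θ = -1 then 0 else 1)) := by
    refine ((hasSum_cos_sq_mul_sin_sq_pow θ).mul_left (Cmat θ i (k + 1))).congr_fun fun m => ?_
    rw [add_comm m, Cmat.add_of_le θ hik, Cmat.add_of_le θ le_rfl, Cmat.succ_self]
    ring
  have head : ∑ j ∈ range (k + 1), Cmat θ i j * Cmat θ (k + 1) j = -(Real.sin θ * Cmat θ i k) := by
    rw [sum_range_succ, sum_eq_zero, Cmat.succ_left_self]
    · ring
    · intro j hj
      rw [Cmat.eq_zero_of_succ_lt θ (i := k + 1) (by simp at hj; omega), mul_zero]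
  simpa only [head, sub_eq_add_neg] using
    (hasSum_nat_add_iff (f := fun j => Cmat θ i j * Cmat θ (k + 1) j) (k + 1)).mp tail

/-- `C(θ) C(θ)ᵀ = 1 - (δ_{t,1} + δ_{t,-1}) e₀₀` where `t = sin θ`:
it is the identity for `|t| < 1`, and the identity minus the `(0,0)` matrix
unit for `t = ±1`. -/
theorem Cmat_mul_transpose_self (θ : ℝ) (i k : ℕ) :
    HasSum (fun j : ℕ => Cmat θ i j * Cmat θ k j)
      ((if i = k then 1 else 0) -
        (if (Real.sin θ = 1 ∨ Real.sin θ = -1) ∧ i = 0 ∧ k = 0 then 1 else 0)) := by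
  wlog hik : i ≤ k generalizing i k
  · simpa only [mul_comm, eq_comm, and_comm (a := i = 0)] using this k i (by omega)
  cases k with
  | zero =>
    obtain rfl : i = 0 := by omega
    convert hasSum_cos_sq_mul_sin_sq_pow θ using 1
    · ext j; rw [Cmat.zero_left]; ring
    · split_ifs <;> simp_all
  | succ k =>
    have h := hasSum_Cmat_mul_Cmat_succ θ hik
    simp only [Nat.succ_ne_zero, and_false, if_false, sub_zero]
    obtain rfl | hlt := eq_or_lt_of_le hik
    · rw [if_pos rfl]
      rw [Cmat.succ_self, Cmat.succ_left_self] at h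
      split_ifs at h with hP
      · rw [Real.cos_eq_zero_iff_sin_eq.mpr hP] at h
        rcases hP with hP | hP <;> simpa [hP] using h
      · convert h using 1
        linarith [Real.sin_sq_add_cos_sq θ]
    · rw [if_neg hlt.ne]
      rw [Cmat.add_of_le θ (by omega : i ≤ k) 1] at h
      split_ifs at h with hP
      · simpa [Cmat.eq_zero_of_cos_eq_zero (Real.cos_eq_zero_iff_sin_eq.mpr hP)
          (by omega : i ≤ k)] using h
      · convert h using 1
        ring
end

section
/- Let $|t|<1$, $s=\sqrt{1-t^2}$, and let $\mathsf C(\theta)$ be as above. For $n,m\in\mathbb N$ and $\mathbf e_{n,m}$ the matrix unit, the conjugate $\mathsf C(\theta)\mathbf e_{n,m}\mathsf C(\theta)^{\top}$ has the following entries: entry $(i,j)=t^{n-i+m-j}s^{e}$ with $e=2+[i>0]+[j>0]$ for $i\le n$, $j\le m$; entry $(n+1,j)=-t^{m-j+1}s^{1+[j>0]}$ for $j\le m$; entry $(i,m+1)=-t^{n-i+1}s^{1+[i>0]}$ for $i\le n$; entry $(n+1,m+1)=t^2$; all other entries are $0$. In particular $\mathsf C(\theta)\mathbf e_{n,m}\mathsf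 C(\theta)^{\top}$ is supported on the finite square $\{0,\dots,n+1\}\times\{0,\dots,m+1\}$. -/
/-- The "shifting rotation" matrix with parameters `t` and `s`. -/
def CmatTS (t s : ℝ) (i j : ℕ) : ℝ :=
  if i = 0 then t ^ j * s
  else if j + 1 = i then -t
  else if i ≤ j then t ^ (j - i) * s ^ 2
  else 0


lemma CmatTS_eq (t s : ℝ) (i n : ℕ) :
    CmatTS t s i n =
      if i ≤ n then t ^ (n - i) * s ^ (1 + (if 0 < i then 1 else 0))
      else if i = n + 1 then -t else 0 := by
  unfold CmatTS
  rcases Nat.eq_zero_or_pos i with h0 | h0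
  · subst h0; simp
  · rw [if_neg (by omega)]
    rcases lt_trichotomy i (n + 1) with h | h | h
    · have hle : i ≤ n := by omega
      rw [if_neg (by omega), if_pos hle, if_pos hle, if_pos h0]
    · rw [if_pos h.symm, if_neg (by omega), if_pos h]
    · rw [if_neg (by omega), if_neg (by omega), if_neg (by omega), if_neg (by omega)]

/-- Explicit form of the conjugate `C(θ) e_{n,m} C(θ)ᵀ` (whose `(i,j)` entry is
`C(θ)_{i,n} · C(θ)_{j,m}`), for `|t| < 1`, `s = √(1-t²)`: it is supported on
the finite square `{0,…,n+1} × {0,…,m+1}`, with the entries of Lemma 3.8(c). -/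
theorem Cmat_conj_matrix_unit (t : ℝ) (ht : |t| < 1) (n m i j : ℕ) :
    (CmatTS t (Real.sqrt (1 - t ^ 2)) i n * CmatTS t (Real.sqrt (1 - t ^ 2)) j m =
      if i ≤ n ∧ j ≤ m then
        t ^ ((n - i) + (m - j)) *
          (Real.sqrt (1 - t ^ 2)) ^
            (2 + (if 0 < i then 1 else 0) + (if 0 < j then 1 else 0))
      else if i = n + 1 ∧ j ≤ m then
        -(t ^ (m - j + 1) * (Real.sqrt (1 - t ^ 2)) ^ (1 + (if 0 < j then 1 else 0)))
      else if i ≤ n ∧ j = m + 1 then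
        -(t ^ (n - i + 1) * (Real.sqrt (1 - t ^ 2)) ^ (1 + (if 0 < i then 1 else 0)))
      else if i = n + 1 ∧ j = m + 1 then t ^ 2
      else 0) ∧
    (n + 1 < i ∨ m + 1 < j →
      CmatTS t (Real.sqrt (1 - t ^ 2)) i n * CmatTS t (Real.sqrt (1 - t ^ 2)) j m = 0) := by
  have key : ∀ i n : ℕ, CmatTS t (Real.sqrt (1 - t ^ 2)) i n =
      if i ≤ n then t ^ (n - i) * (Real.sqrt (1 - t ^ 2)) ^ (1 + (if 0 < i then 1 else 0))
      else if i = n + 1 then -t else 0 := fun i n => CmatTS_eq _ _ i n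
  rw [key, key]
  set s := Real.sqrt (1 - t ^ 2)
  set a := (if 0 < i then 1 else 0) with ha
  set b := (if 0 < j then 1 else 0) with hb
  constructor
  · split_ifs with h1 h2 h3 h4 h5 h6 h7 h8 <;>
      first
      | (exfalso; omega)
      | (rw [show 2 + a + b = (1 + a) + (1 + b) from by omega, pow_add]; ring)
      | (rw [pow_succ]; ring)
      | ring
  · intro h
    split_ifs <;> first | (exfalso; omega) | ring
end

section
/- With notation as above, define the Bott involution $\mathsf B(a)=\mathsf U(a)\mathsf Q\mathsf U(a)^{-1}$ for an invertible Laurent polynomial $a$ over a unital algebra $\mathfrak A$. Then: (a) $\mathsf B(a)^2=1$; (b) $\mathsf B(ac)=\mathsf B(a)$ for any constant unit $c\in\mathfrak A^{\times}$ (viewed as a constant loop); (c) $\mathsf B(a)-\mathsf Q$ has, in each entry position $(n,m)$, an entry expressible as a finite sum of products of coefficients of $a$ and $a^{-1}$, and $\mathsf B$ determines $a$ up to right multiplication by a constant: if $\mathsf B(a)=\mathsf B(a')$ and $a(1)=a'(1)$ then $a=a'$ (where $a(1)=\sum_n a_n$). -/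
/-!
Write `𝖴 = laurentMatrix a`, `𝖵 = laurentMatrix b` and `𝖰 = diagonal (signQ A)`, so that
`𝖡(a) = 𝖴 (𝖰 𝖵)`. The convolution identities say `𝖴 𝖵 = 𝖵 𝖴 = 1`; all these matrices are
banded, so their products are associative and `𝖡(a)² = 𝖴 𝖰 (𝖵 𝖴) 𝖰 𝖵 = 𝖴 𝖰² 𝖵 = 1`.
A constant unit `c` cancels in `𝖴(ac) 𝖰 𝖴(ac)⁻¹` because `𝖰 = ±1` entrywise commutes with it.
Entrywise, `𝖡(a) - 𝖰 = (𝖴 𝖰 - 𝖰 𝖴) 𝖵`, and `𝖴 𝖰 - 𝖰 𝖴` only has entries where `𝖴` crosses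
the sign change of `𝖰`, near the origin. Finally, shifting `𝖡(a)` along the diagonal
recovers all products `a p * b q`; summing over `p` and then over `q`, and using that
`a(1)` has the left inverse `b(1)`, recovers `b` and then `a`.
-/

open Function

/-- The sign function `q k = 1` for `k ≥ 0`, `-1` for `k < 0` (diagonal of `𝖰`). -/
def signQ (A : Type*) [Ring A] (k : ℤ) : A := if 0 ≤ k then 1 else -1

/-- The entry `(n,m)` of the Bott involution `𝖡(a) = 𝖴(a) 𝖰 𝖴(a)⁻¹`, where
`a` has coefficients `a : ℤ → A` and `a⁻¹` has coefficients `b : ℤ → A`. -/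
noncomputable def bottEntry {A : Type*} [Ring A] (a b : ℤ → A) (n m : ℤ) : A :=
  ∑ᶠ k : ℤ, a (n - k) * (signQ A k * b (k - m))

theorem finsum_comm_of_finite {α β M : Type*} [AddCommMonoid M] {f : α → β → M}
    (hf : (support (uncurry f)).Finite) :
    ∑ᶠ a, ∑ᶠ b, f a b = ∑ᶠ b, ∑ᶠ a, f a b := by
  have hf' : (support fun p : β × α => f p.2 p.1).Finite :=
    (hf.image Prod.swap).subset fun p hp => ⟨p.swap, hp, rfl⟩
  calc ∑ᶠ a, ∑ᶠ b, f a b = ∑ᶠ p : α × β, f p.1 p.2 := (finsum_curry (uncurry f) hf).symm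
    _ = ∑ᶠ p : β × α, f p.2 p.1 :=
      (finsum_comp_equiv (Equiv.prodComm β α) (f := fun p : α × β => f p.1 p.2)).symm
    _ = ∑ᶠ b, ∑ᶠ a, f a b := finsum_curry _ hf'

theorem exists_ne_zero_of_finsum_ne_zero {α M : Type*} [AddCommMonoid M] {f : α → M}
    (h : ∑ᶠ i, f i ≠ 0) : ∃ i, f i ≠ 0 :=
  not_forall.1 fun h' => h (finsum_eq_zero_of_forall_eq_zero h')

theorem finsum_mul_finsum_eq_finsum_finsum_mul_sub {G R : Type*} [AddCommGroup G]
    [Semiring R] {f g : G → R} (hf : (support f).Finite) (hg : (support g).Finite) :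
    (∑ᶠ i, f i) * ∑ᶠ i, g i = ∑ᶠ k, ∑ᶠ j, f j * g (k - j) := by
  have hfin : (support (uncurry fun j k => f j * g (k - j))).Finite :=
    ((hf.prod hg).image fun p => (p.1, p.1 + p.2)).subset fun ⟨j, k⟩ h =>
      ⟨(j, k - j), ⟨left_ne_zero_of_mul h, right_ne_zero_of_mul h⟩, by simp⟩
  calc (∑ᶠ i, f i) * ∑ᶠ i, g i = ∑ᶠ j, ∑ᶠ l, f j * g l := by
        rw [finsum_mul' _ _ hf]
        exact finsum_congr fun j => mul_finsum' _ _ hg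
    _ = ∑ᶠ j, ∑ᶠ k, f j * g (k - j) := finsum_congr fun j =>
        (finsum_comp_equiv (Equiv.subRight j) (f := fun l => f j * g l)).symm
    _ = ∑ᶠ k, ∑ᶠ j, f j * g (k - j) := finsum_comm_of_finite hfin

theorem eq_of_forall_mul_eq_mul {ι R : Type*} [Semiring R] {a b a' b' : ι → R}
    (ha : (support a).Finite) (ha' : (support a').Finite)
    (hb : (support b).Finite) (hb' : (support b').Finite)
    (h : ∀ p q, a p * b q = a' p * b' q) (hba : (∑ᶠ i, b i) * ∑ᶠ i, a i = 1)
    (hsum : ∑ᶠ i, a i = ∑ᶠ i, a' i) : a = a' := by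
  obtain rfl : b = b' := funext fun q => by
    have hq : (∑ᶠ i, a i) * b q = (∑ᶠ i, a i) * b' q := by
      rw [finsum_mul' _ _ ha, hsum, finsum_mul' _ _ ha']
      exact finsum_congr fun p => h p q
    calc b q = (∑ᶠ i, b i) * ((∑ᶠ i, a i) * b q) := by rw [← mul_assoc, hba, one_mul]
      _ = b' q := by rw [hq, ← mul_assoc, hba, one_mul]
  funext p
  have hp : a p * ∑ᶠ i, b i = a' p * ∑ᶠ i, b i := by
    rw [mul_finsum' _ _ hb, mul_finsum' _ _ hb']
    exact finsum_congr (h p)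
  calc a p = a p * (∑ᶠ i, b i) * ∑ᶠ i, a i := by rw [mul_assoc, hba, mul_one]
    _ = a' p := by rw [hp, mul_assoc, hba, mul_one]

namespace Matrix

variable {ι κ μ ν R : Type*} [Semiring R]

/-- Entries are `finsum`s, hence junk (zero) when the summand has infinite support. -/
noncomputable def finsumMul (X : Matrix ι κ R) (Y : Matrix κ μ R) : Matrix ι μ R :=
  fun i j => ∑ᶠ k, X i k * Y k j

def RowFinite (X : Matrix ι κ R) : Prop := ∀ i, (support (X i)).Finite

def ColFinite (X : Matrix ι κ R) : Prop := ∀ j, (support fun i => X i j).Finite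

theorem finsumMul_assoc {X : Matrix ι κ R} {Z : Matrix μ ν R} (hX : RowFinite X)
    (hZ : ColFinite Z) (Y : Matrix κ μ R) :
    finsumMul (finsumMul X Y) Z = finsumMul X (finsumMul Y Z) := by
  funext i j
  have hfin : (support (uncurry fun k l => X i k * Y k l * Z l j)).Finite :=
    ((hX i).prod (hZ j)).subset fun ⟨_, _⟩ h =>
      ⟨left_ne_zero_of_mul (left_ne_zero_of_mul h), right_ne_zero_of_mul h⟩
  calc ∑ᶠ l, (∑ᶠ k, X i k * Y k l) * Z l j = ∑ᶠ l, ∑ᶠ k, X i k * Y k l * Z l j :=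
        finsum_congr fun l => finsum_mul' _ _ ((hX i).subset (support_mul_subset_left _ _))
    _ = ∑ᶠ k, ∑ᶠ l, X i k * Y k l * Z l j := (finsum_comm_of_finite hfin).symm
    _ = ∑ᶠ k, X i k * ∑ᶠ l, Y k l * Z l j := finsum_congr fun k => by
        rw [mul_finsum' _ _ ((hZ j).subset (support_mul_subset_right _ _))]
        simp only [mul_assoc]

theorem RowFinite.finsumMul {X : Matrix ι κ R} {Y : Matrix κ μ R} (hX : RowFinite X)
    (hY : RowFinite Y) : RowFinite (finsumMul X Y) := fun i =>
  ((hX i).biUnion fun k _ => hY k).subset fun j hj => by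
    obtain ⟨k, hk⟩ := exists_ne_zero_of_finsum_ne_zero hj
    exact Set.mem_iUnion₂.2 ⟨k, left_ne_zero_of_mul hk, right_ne_zero_of_mul hk⟩

theorem ColFinite.finsumMul {X : Matrix ι κ R} {Y : Matrix κ μ R} (hX : ColFinite X)
    (hY : ColFinite Y) : ColFinite (finsumMul X Y) := fun j =>
  ((hY j).biUnion fun k _ => hX k).subset fun i hi => by
    obtain ⟨k, hk⟩ := exists_ne_zero_of_finsum_ne_zero hi
    exact Set.mem_iUnion₂.2 ⟨k, right_ne_zero_of_mul hk, left_ne_zero_of_mul hk⟩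

variable [DecidableEq ι]

theorem finsumMul_one (X : Matrix κ ι R) : finsumMul X 1 = X :=
  funext₂ fun i j => (finsum_eq_single _ j fun k hk => by simp [one_apply_ne hk]).trans
    (by simp)

theorem finsumMul_diagonal_left (d : ι → R) (X : Matrix ι κ R) (i : ι) (j : κ) :
    finsumMul (diagonal d) X i j = d i * X i j :=
  (finsum_eq_single _ i fun k hk => by simp [diagonal_apply_ne _ (Ne.symm hk)]).trans (by simp)

theorem rowFinite_diagonal (d : ι → R) : RowFinite (diagonal d) := fun i =>
  (Set.finite_singleton i).subset fun k hk => by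
    by_contra h
    exact hk (diagonal_apply_ne _ (Ne.symm h))

theorem colFinite_diagonal (d : ι → R) : ColFinite (diagonal d) := fun j =>
  (Set.finite_singleton j).subset fun k hk => by
    by_contra h
    exact hk (diagonal_apply_ne _ h)

end Matrix

open Matrix

section Laurent

variable {G R : Type*} [AddCommGroup G] [Semiring R]

/-- The Laurent (multiplication) operator `𝖴(a)` of a loop with coefficients `a`. -/
def laurentMatrix (a : G → R) : Matrix G G R := fun n m => a (n - m)

theorem rowFinite_laurentMatrix {a : G → R} (ha : (support a).Finite) :
    RowFinite (laurentMatrix a) := fun n =>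
  (ha.image (n - ·)).subset fun m hm => ⟨n - m, hm, sub_sub_cancel n m⟩

theorem colFinite_laurentMatrix {a : G → R} (ha : (support a).Finite) :
    ColFinite (laurentMatrix a) := fun m =>
  (ha.image (· + m)).subset fun n hn => ⟨n - m, hn, sub_add_cancel n m⟩

theorem laurentMatrix_finsumMul_laurentMatrix [DecidableEq G] {a b : G → R}
    (hab : ∀ k, ∑ᶠ j, a j * b (k - j) = if k = 0 then (1 : R) else 0) :
    finsumMul (laurentMatrix a) (laurentMatrix b) = 1 := by
  funext n m
  calc ∑ᶠ k, a (n - k) * b (k - m) = ∑ᶠ j, a j * b (n - m - j) := by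
        refine .trans (finsum_congr fun k => ?_)
          (finsum_comp_equiv (Equiv.subLeft n) (f := fun j => a j * b (n - m - j)))
        rw [Equiv.subLeft_apply, sub_sub_sub_cancel_left]
    _ = (1 : Matrix G G R) n m := (hab _).trans (by simp only [sub_eq_zero, one_apply])

end Laurent

section Bott

variable {A : Type*} [Ring A]

theorem signQ_mul_self (k : ℤ) : signQ A k * signQ A k = 1 := by
  unfold signQ; split_ifs <;> simp

theorem signQ_commute (k : ℤ) (x : A) : Commute (signQ A k) x := by
  unfold signQ; split_ifs
  exacts [Commute.one_left x, Commute.neg_one_left x]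

theorem signQ_congr {k l : ℤ} (h : 0 ≤ k ↔ 0 ≤ l) : signQ A k = signQ A l := by
  simp only [signQ, h]

theorem bottEntry_eq_finsumMul (a b : ℤ → A) :
    bottEntry a b =
      finsumMul (laurentMatrix a) (finsumMul (diagonal (signQ A)) (laurentMatrix b)) := by
  funext n m
  exact finsum_congr fun k =>
    congrArg _ (finsumMul_diagonal_left (signQ A) (laurentMatrix b) k m).symm

theorem bottEntry_finsumMul_self {a b : ℤ → A} (ha : (support a).Finite)
    (hb : (support b).Finite)
    (hab : ∀ k, ∑ᶠ j, a j * b (k - j) = if k = 0 then (1 : A) else 0)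
    (hba : ∀ k, ∑ᶠ j, b j * a (k - j) = if k = 0 then (1 : A) else 0) :
    finsumMul (bottEntry a b) (bottEntry a b) = 1 := by
  set U := laurentMatrix a
  set V := laurentMatrix b
  set Q := diagonal (signQ A)
  set W := finsumMul Q V with hW
  have hWrow : RowFinite W := (rowFinite_diagonal _).finsumMul (rowFinite_laurentMatrix hb)
  have hWcol : ColFinite W := (colFinite_diagonal _).finsumMul (colFinite_laurentMatrix hb)
  have hWU : finsumMul W U = Q := by
    rw [finsumMul_assoc (rowFinite_diagonal _) (colFinite_laurentMatrix ha),
      laurentMatrix_finsumMul_laurentMatrix hba, finsumMul_one]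
  have hQW : finsumMul Q W = V := by
    funext i j
    simp only [hW, Q, finsumMul_diagonal_left, ← mul_assoc, signQ_mul_self, one_mul]
  rw [bottEntry_eq_finsumMul,
    finsumMul_assoc (rowFinite_laurentMatrix ha)
      ((colFinite_laurentMatrix ha).finsumMul hWcol),
    ← finsumMul_assoc hWrow hWcol, hWU, hQW, laurentMatrix_finsumMul_laurentMatrix hab]

theorem bottEntry_mul_unit (a b : ℤ → A) (c : Aˣ) :
    bottEntry (fun j => a j * c) (fun j => ↑c⁻¹ * b j) = bottEntry a b :=
  funext₂ fun n m => finsum_congr fun k => by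
    rw [mul_assoc, ← (signQ_commute k (c : A)).left_comm, Units.mul_inv_cancel_left]

theorem bottEntry_sub_diagonal {a b : ℤ → A} (ha : (support a).Finite)
    (hab : ∀ k, ∑ᶠ j, a j * b (k - j) = if k = 0 then (1 : A) else 0) (n m : ℤ) :
    bottEntry a b n m - diagonal (signQ A) n m =
      ∑ᶠ k, a (n - k) * ((signQ A k - signQ A n) * b (k - m)) := by
  have hrow := rowFinite_laurentMatrix ha n
  have hdiag : diagonal (signQ A) n m = ∑ᶠ k, a (n - k) * (signQ A n * b (k - m)) :=
    calc diagonal (signQ A) n m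
          = signQ A n * finsumMul (laurentMatrix a) (laurentMatrix b) n m := by
          rw [laurentMatrix_finsumMul_laurentMatrix hab, diagonal_apply, one_apply]
          split_ifs <;> simp
      _ = ∑ᶠ k, signQ A n * (a (n - k) * b (k - m)) :=
          mul_finsum' _ _ (hrow.subset (support_mul_subset_left _ _))
      _ = ∑ᶠ k, a (n - k) * (signQ A n * b (k - m)) :=
          finsum_congr fun k => (signQ_commute n _).left_comm _
  rw [hdiag, bottEntry, ← finsum_sub_distrib (hrow.subset (support_mul_subset_left _ _))
    (hrow.subset (support_mul_subset_left _ _))]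
  simp only [← mul_sub, ← sub_mul]

theorem finite_support_bottEntry_sub_diagonal {a b : ℤ → A} (ha : (support a).Finite)
    (hb : (support b).Finite)
    (hab : ∀ k, ∑ᶠ j, a j * b (k - j) = if k = 0 then (1 : A) else 0) :
    (support fun p : ℤ × ℤ => bottEntry a b p.1 p.2 - diagonal (signQ A) p.1 p.2).Finite := by
  obtain ⟨N, hN⟩ := ((ha.union hb).image abs).bddAbove
  refine ((Set.finite_Icc (-N) N).prod (Set.finite_Icc (-(3 * N)) (3 * N))).subset ?_
  rintro ⟨n, m⟩ h
  rw [mem_support, bottEntry_sub_diagonal ha hab] at h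
  obtain ⟨k, hk⟩ := exists_ne_zero_of_finsum_ne_zero h
  have hnk := abs_le.1 (hN ⟨n - k, .inl (left_ne_zero_of_mul hk), rfl⟩)
  have hkm := abs_le.1 (hN ⟨k - m, .inr (right_ne_zero_of_mul (right_ne_zero_of_mul hk)), rfl⟩)
  have hsign : ¬(0 ≤ k ↔ 0 ≤ n) := fun h =>
    left_ne_zero_of_mul (right_ne_zero_of_mul hk) (sub_eq_zero.2 (signQ_congr h))
  simp only [Set.mem_prod, Set.mem_Icc]
  omega

/-- The entrywise form of the inversion formula `2 a(z₁) a(z₂)⁻¹ = 𝖡(a) - 𝖴(z) 𝖡(a) 𝖴(z⁻¹)`: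
after the shift the two sums differ only through `signQ A k - signQ A (k - 1)`, which
vanishes except at `k = 0`. -/
theorem two_mul_mul_eq_bottEntry_sub {a : ℤ → A} (ha : (support a).Finite) (b : ℤ → A)
    (p q : ℤ) :
    2 * (a p * b q) = bottEntry a b p (-q) - bottEntry a b (p - 1) (-q - 1) := by
  have hshift : bottEntry a b (p - 1) (-q - 1) =
      ∑ᶠ k, a (p - k) * (signQ A (k - 1) * b (k + q)) := by
    refine .trans (finsum_comp_equiv (Equiv.subRight 1)
      (f := fun k => a (p - 1 - k) * (signQ A k * b (k - (-q - 1))))).symm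
      (finsum_congr fun k => ?_)
    simp only [Equiv.subRight_apply]
    ring_nf
  have hfin (g : ℤ → A) : (support fun k => a (p - k) * g k).Finite :=
    (rowFinite_laurentMatrix ha p).subset (support_mul_subset_left _ _)
  rw [hshift, bottEntry]
  simp only [sub_neg_eq_add]
  rw [← finsum_sub_distrib (hfin _) (hfin _), finsum_eq_single _ 0 fun k hk => ?_]
  · simp [signQ, two_mul]
  · rw [signQ_congr (by omega : 0 ≤ k ↔ 0 ≤ k - 1), sub_self]

theorem mul_eq_mul_of_bottEntry_eq [Invertible (2 : A)] {a b a' b' : ℤ → A}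
    (ha : (support a).Finite) (ha' : (support a').Finite)
    (h : bottEntry a b = bottEntry a' b') (p q : ℤ) : a p * b q = a' p * b' q :=
  (isUnit_of_invertible (2 : A)).mul_left_cancel <| by
    rw [two_mul_mul_eq_bottEntry_sub ha, h, two_mul_mul_eq_bottEntry_sub ha']

end Bott

/-- Properties of the Bott involution `𝖡(a) = 𝖴(a) 𝖰 𝖴(a)⁻¹` for an invertible
Laurent polynomial `a` (coefficients `a`, inverse coefficients `b`):
(a) `𝖡(a)² = 1`; (b) `𝖡(ac) = 𝖡(a)` for a constant unit `c`;
(c) `𝖡(a) - 𝖰` has finitely many nonzero entries, and `𝖡(a)` together with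
`a(1)` determines `a`. -/
theorem bott_involution_properties {A : Type*} [Ring A] [Invertible (2 : A)]
    (a b : ℤ → A)
    (ha : (support a).Finite) (hb : (support b).Finite)
    (hab : ∀ k : ℤ, ∑ᶠ j : ℤ, a j * b (k - j) = if k = 0 then (1 : A) else 0)
    (hba : ∀ k : ℤ, ∑ᶠ j : ℤ, b j * a (k - j) = if k = 0 then (1 : A) else 0) :
    -- (a) `𝖡(a)` is an involution
    (∀ n m : ℤ, ∑ᶠ k : ℤ, bottEntry a b n k * bottEntry a b k m =
      if n = m then (1 : A) else 0) ∧
    -- (b) invariance under right multiplication by a constant unit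
    (∀ c : Aˣ, ∀ n m : ℤ,
      bottEntry (fun j => a j * (c : A)) (fun j => ((c⁻¹ : Aˣ) : A) * b j) n m =
        bottEntry a b n m) ∧
    -- (c) `𝖡(a) - 𝖰` has finitely many nonzero entries
    (Set.Finite (support fun p : ℤ × ℤ =>
      bottEntry a b p.1 p.2 - if p.1 = p.2 then signQ A p.1 else 0)) ∧
    -- (c) uniqueness: `𝖡(a) = 𝖡(a')` and `a(1) = a'(1)` imply `a = a'`
    (∀ a' b' : ℤ → A, (support a').Finite → (support b').Finite →
      (∀ k : ℤ, ∑ᶠ j : ℤ, a' j * b' (k - j) = if k = 0 then (1 : A) else 0) →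
      (∀ k : ℤ, ∑ᶠ j : ℤ, b' j * a' (k - j) = if k = 0 then (1 : A) else 0) →
      (∀ n m : ℤ, bottEntry a b n m = bottEntry a' b' n m) →
      (∑ᶠ n : ℤ, a n) = (∑ᶠ n : ℤ, a' n) →
      a = a') := by
  refine ⟨fun n m => ?_, fun c n m => ?_, ?_, ?_⟩
  · exact congrFun₂ (bottEntry_finsumMul_self ha hb hab hba) n m
  · exact congrFun₂ (bottEntry_mul_unit a b c) n m
  · simpa only [diagonal_apply] using finite_support_bottEntry_sub_diagonal ha hb hab
  · intro a' b' ha' hb' _ _ hB hsum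
    have hprod := mul_eq_mul_of_bottEntry_eq ha ha' (funext₂ hB)
    have hinv : (∑ᶠ i, b i) * ∑ᶠ i, a i = 1 := by
      rw [finsum_mul_finsum_eq_finsum_finsum_mul_sub hb ha, finsum_congr hba]
      exact (finsum_eq_single _ 0 fun k hk => if_neg hk).trans (if_pos rfl)
    exact eq_of_forall_mul_eq_mul ha ha' hb hb' hprod hinv hsum
end

section
/- Let $R$ be a unital ring and consider $\mathbb Z\times\mathbb Z$ matrices over $R$ decomposed into four $\mathbb N\times\mathbb N$ quadrants via the splitting $\mathbb Z=\overline{\mathbb N}\,\dot\cup\,\mathbb N$ (negative indices relabelled by $n\mapsto -1-n$). For Laurent polynomials $a,b$ over $R$ with quadrant maps $\mathsf W(a)=\mathsf U^{++}(a)$ (compression of $\mathsf U(a)$ to $\mathbb N\times\mathbb N$) and $\mathsf Y(b)=\mathsf U^{-+}(b)$, the multiplicative anomaly formula holds: $\mathsf W(a)\mathsf W(b)=\mathsf W(ab)-\mathsf U^{+-}(a)\,\mathsf U^{-+}(b)$. Moreover, if $a,b$ are Laurent polynomials then $\mathsf U^{+-}(a)\mathsf U^{-+}(b)$ has only finitely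 many nonzero entries. -/
open Function

/-- Multiplicative anomaly of Toeplitz compressions: for Laurent polynomials
`a, b` (finitely supported coefficient functions `ℤ → R`), with
`𝖶(a)_{i,j} = a(i-j)` the `ℕ × ℕ` compression of the Laurent matrix
`𝖴(a)_{n,m} = a(n-m)` and the quadrant decomposition coming from
`ℤ = ℕ̄ ⊔ ℕ` (negatives relabelled by `n ↦ -1-n`):
`𝖶(a)𝖶(b) = 𝖶(ab) - 𝖴⁺⁻(a)𝖴⁻⁺(b)`, entrywise; and
`𝖴⁺⁻(a)𝖴⁻⁺(b)` has finitely many nonzero entries. -/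
theorem toeplitz_anomaly {R : Type*} [Ring R] (a b : ℤ → R)
    (ha : (support a).Finite) (hb : (support b).Finite) :
    (∀ i k : ℕ,
      ∑ᶠ j : ℕ, a ((i : ℤ) - j) * b ((j : ℤ) - k) =
        (∑ᶠ j : ℤ, a j * b ((i : ℤ) - k - j)) -
          ∑ᶠ j : ℕ, a ((i : ℤ) + 1 + j) * b (-1 - (j : ℤ) - k)) ∧
    Set.Finite (support fun p : ℕ × ℕ =>
      ∑ᶠ j : ℕ, a ((p.1 : ℤ) + 1 + j) * b (-1 - (j : ℤ) - p.2)) := by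
  constructor
  · intro i k
    set f : ℤ → R := fun j => a ((i : ℤ) - j) * b ((j : ℤ) - k) with hf
    have hfin : (support f).Finite := by
      apply (ha.image (fun t => (i : ℤ) - t)).subset
      intro j hj
      have haj : a ((i : ℤ) - j) ≠ 0 := fun h => hj (by simp [hf, h])
      exact ⟨(i : ℤ) - j, haj, by ring⟩
    have h1 : (∑ᶠ j : ℤ, a j * b ((i : ℤ) - k - j)) = ∑ᶠ j : ℤ, f j := by
      rw [← finsum_comp_equiv (Equiv.subLeft (i : ℤ))
        (f := fun j => a j * b ((i : ℤ) - k - j))]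
      refine finsum_congr fun j => ?_
      simp only [Equiv.subLeft_apply, hf]
      congr 1
      congr 1
      ring
    have hcover : (Set.univ : Set ℤ) =
        Set.range ((↑) : ℕ → ℤ) ∪ Set.range (fun n : ℕ => -1 - (n : ℤ)) := by
      ext z
      simp only [Set.mem_univ, Set.mem_union, Set.mem_range, true_iff]
      rcases le_or_gt 0 z with h | h
      · exact Or.inl ⟨z.toNat, by omega⟩
      · exact Or.inr ⟨(-1 - z).toNat, by omega⟩
    have hdisj : Disjoint (Set.range ((↑) : ℕ → ℤ))
        (Set.range (fun n : ℕ => -1 - (n : ℤ))) := by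
      rw [Set.disjoint_left]
      rintro z ⟨n, rfl⟩ ⟨m, hm⟩
      have hm' : -1 - (m : ℤ) = (n : ℤ) := hm
      omega
    have h2 : (∑ᶠ j : ℤ, f j) =
        (∑ᶠ j ∈ Set.range ((↑) : ℕ → ℤ), f j) +
          ∑ᶠ j ∈ Set.range (fun n : ℕ => -1 - (n : ℤ)), f j := by
      rw [← finsum_mem_univ, hcover]
      exact finsum_mem_union' hdisj (hfin.subset Set.inter_subset_right)
        (hfin.subset Set.inter_subset_right)
    have h3 : (∑ᶠ j ∈ Set.range ((↑) : ℕ → ℤ), f j) =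
        ∑ᶠ j : ℕ, a ((i : ℤ) - j) * b ((j : ℤ) - k) :=
      finsum_mem_range (fun x y h => by exact_mod_cast h)
    have h4 : (∑ᶠ j ∈ Set.range (fun n : ℕ => -1 - (n : ℤ)), f j) =
        ∑ᶠ j : ℕ, a ((i : ℤ) + 1 + j) * b (-1 - (j : ℤ) - k) := by
      rw [finsum_mem_range (f := f) (g := fun n : ℕ => -1 - (n : ℤ))
        (fun x y h => by simp only at h; omega)]
      refine finsum_congr fun n => ?_
      simp only [hf]
      congr 2 <;> · ring
    rw [h1, h2, h3, h4, add_sub_cancel_right]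
  · obtain ⟨N, hN⟩ : BddAbove (support a) := ha.bddAbove
    obtain ⟨M, hM⟩ : BddBelow (support b) := hb.bddBelow
    apply ((Set.finite_Iio N.toNat.succ).prod (Set.finite_Iio (-M).toNat.succ)).subset
    rintro ⟨i, k⟩ hp
    have : ¬ ∀ j : ℕ, a ((i : ℤ) + 1 + j) * b (-1 - (j : ℤ) - k) = 0 := by
      intro h
      exact hp (finsum_eq_zero_of_forall_eq_zero h)
    push_neg at this
    obtain ⟨j, hj⟩ := this
    have haj : a ((i : ℤ) + 1 + j) ≠ 0 := fun h => hj (by rw [h, zero_mul])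
    have hbj : b (-1 - (j : ℤ) - k) ≠ 0 := fun h => hj (by rw [h, mul_zero])
    have h1 : (i : ℤ) + 1 + j ≤ N := hN haj
    have h2 : M ≤ -1 - (j : ℤ) - k := hM hbj
    constructor <;> simp only [Set.mem_Iio] <;> omega
end

section
/- Over a unital ring, the Toeplitz-type algebra identity holds: the set $\mathcal T$ of $\mathbb N\times\mathbb N$ matrices of the form $\mathsf W(a)+p$, where $a$ ranges over Laurent polynomials and $p$ over matrices with finitely many nonzero entries, is closed under matrix multiplication, with product $(\mathsf W(a)+p)(\mathsf W(b)+q)=\mathsf W(ab)+\big(-\mathsf U^{+-}(a)\mathsf U^{-+}(b)+\mathsf W(a)q+p\mathsf W(b)+pq\big)$, and the decomposition $\mathsf W(a)+p$ ($a$ Laurent polynomial, $p$ finite) is unique. Hence the symbol map $\sigma(\mathsf W(a)+p)=a$ is a well-defined surjective ring homomorphism from $\mathcal T$ onto the Laurent polynomial ring, with kernel the finite matrices. -/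
/-!
Split the convolution `∑_{j ∈ ℤ} a j b (i - k - j)` at `j = i`: the terms with `j ≤ i` form the
entry of `𝖶(a) 𝖶(b)`, the terms with `j > i` the entry of the Hankel product `𝖴⁺⁻(a) 𝖴⁻⁺(b)`;
expanding `(𝖶(a) + p)(𝖶(b) + q)` then gives the product formula. Both Hankel factors are finite
matrices because `a` is bounded above and `b` below on their supports, and a product of a finite
matrix with one whose rows (or columns) are finitely supported is finite. Uniqueness holds because
a nonzero Toeplitz matrix has an infinite nonzero diagonal.
-/

open Function

theorem finsum_int_eq_finsum_sub_nat_add_finsum_add_nat {M : Type*} [AddCommMonoid M]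
    {f : ℤ → M} (hf : f.HasFiniteSupport) (c : ℤ) :
    ∑ᶠ j : ℤ, f j = (∑ᶠ n : ℕ, f (c - n)) + ∑ᶠ n : ℕ, f (c + 1 + n) := by
  have hcover : Set.range (fun n : ℕ => c - n) ∪ Set.range (fun n : ℕ => c + 1 + n) = .univ := by
    refine Set.eq_univ_of_forall fun z => ?_
    rcases le_or_gt z c with h | h
    · exact .inl ⟨(c - z).toNat, show c - _ = z by omega⟩
    · exact .inr ⟨(z - c - 1).toNat, show c + 1 + _ = z by omega⟩
  have hdisj : Disjoint (Set.range fun n : ℕ => c - n) (Set.range fun n : ℕ => c + 1 + n) := by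
    rw [Set.disjoint_left]
    rintro _ ⟨n, rfl⟩ ⟨m, hm⟩
    simp only at hm
    omega
  rw [← finsum_mem_univ, ← hcover, finsum_mem_union' hdisj (hf.subset Set.inter_subset_right)
    (hf.subset Set.inter_subset_right), finsum_mem_range fun n m h => by simpa using h,
    finsum_mem_range fun n m h => by simpa using h]

theorem toeplitz_mul_toeplitz_apply {R : Type*} [Ring R] {a : ℤ → R} (ha : a.HasFiniteSupport)
    (b : ℤ → R) (i k : ℕ) :
    ∑ᶠ j : ℕ, a ((i : ℤ) - j) * b ((j : ℤ) - k) =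
      (∑ᶠ j : ℤ, a j * b ((i : ℤ) - k - j)) -
        ∑ᶠ j : ℕ, a ((i : ℤ) + 1 + j) * b (-1 - (j : ℤ) - k) := by
  rw [finsum_int_eq_finsum_sub_nat_add_finsum_add_nat (by fun_prop) i, eq_sub_iff_add_eq]
  congr 1 <;> exact finsum_congr fun j => by ring_nf

theorem finsum_add_mul_add {α R : Type*} [NonUnitalNonAssocSemiring R] {f f' : α → R}
    (hf : f.HasFiniteSupport) (hf' : f'.HasFiniteSupport) (g g' : α → R) :
    ∑ᶠ j, (f j + f' j) * (g j + g' j) =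
      (∑ᶠ j, f j * g j) + (∑ᶠ j, f j * g' j) + (∑ᶠ j, f' j * g j) + ∑ᶠ j, f' j * g' j := by
  simp only [add_mul, mul_add]
  rw [finsum_add_distrib (by fun_prop) (by fun_prop), finsum_add_distrib (by fun_prop)
    (by fun_prop), finsum_add_distrib (by fun_prop) (by fun_prop)]
  abel

section MatrixProduct

variable {α β γ R : Type*} [NonUnitalNonAssocSemiring R]

theorem support_finsum_mul_subset (F : α → β → R) (G : β → γ → R) :
    support (fun x : α × γ => ∑ᶠ j, F x.1 j * G j x.2) ⊆
      {x | ∃ j, F x.1 j ≠ 0 ∧ G j x.2 ≠ 0} := by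
  intro x hx
  contrapose! hx
  simp only [Set.mem_ofPred_eq, not_exists, not_and_or, not_ne_iff] at hx
  exact notMem_support.mpr (finsum_eq_zero_of_forall_eq_zero fun j =>
    (hx j).elim (fun h => by rw [h, zero_mul]) fun h => by rw [h, mul_zero])

theorem hasFiniteSupport_finsum_mul_of_left {F : α → β → R} {G : β → γ → R}
    (hF : (uncurry F).HasFiniteSupport) (hG : ∀ j, (G j).HasFiniteSupport) :
    HasFiniteSupport fun x : α × γ => ∑ᶠ j, F x.1 j * G j x.2 := by
  refine (hF.biUnion fun y _ => (Set.finite_singleton y.1).prod (hG y.2)).subset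
    ((support_finsum_mul_subset F G).trans ?_)
  rintro ⟨i, k⟩ ⟨j, hF, hG⟩
  exact Set.mem_biUnion (x := (i, j)) hF ⟨rfl, hG⟩

theorem hasFiniteSupport_finsum_mul_of_right {F : α → β → R} {G : β → γ → R}
    (hF : ∀ j, HasFiniteSupport fun i => F i j) (hG : (uncurry G).HasFiniteSupport) :
    HasFiniteSupport fun x : α × γ => ∑ᶠ j, F x.1 j * G j x.2 := by
  refine (hG.biUnion fun y _ => (hF y.1).prod (Set.finite_singleton y.2)).subset
    ((support_finsum_mul_subset F G).trans ?_)
  rintro ⟨i, k⟩ ⟨j, hF, hG⟩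
  exact Set.mem_biUnion (x := (j, k)) hG ⟨hF, rfl⟩

end MatrixProduct

section FiniteSupport

variable {M : Type*} [Zero M]

theorem Function.HasFiniteSupport.row {α β : Type*} {p : α → β → M}
    (hp : (uncurry p).HasFiniteSupport) (i : α) : (p i).HasFiniteSupport :=
  show (uncurry p ∘ Prod.mk i).HasFiniteSupport from
    hp.comp_of_injective (Prod.mk_right_injective i)

theorem hasFiniteSupport_toeplitz_row {a : ℤ → M} (ha : a.HasFiniteSupport) (i : ℕ) :
    HasFiniteSupport fun j : ℕ => a ((i : ℤ) - j) :=
  ha.comp_of_injective (sub_right_injective.comp Nat.cast_injective)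

theorem hasFiniteSupport_toeplitz_col {a : ℤ → M} (ha : a.HasFiniteSupport) (j : ℕ) :
    HasFiniteSupport fun i : ℕ => a ((i : ℤ) - j) :=
  ha.comp_of_injective ((sub_left_injective (b := (j : ℤ))).comp Nat.cast_injective)

theorem hasFiniteSupport_hankel {a : ℤ → M} (ha : a.HasFiniteSupport) :
    HasFiniteSupport fun x : ℕ × ℕ => a ((x.1 : ℤ) + 1 + x.2) := by
  obtain ⟨N, hN⟩ := Set.Finite.bddAbove ha
  refine ((Set.finite_Iic N.toNat).prod (Set.finite_Iic N.toNat)).subset fun x hx => ?_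
  have := hN hx
  simp only [Set.mem_prod, Set.mem_Iic]
  omega

theorem hasFiniteSupport_hankel_neg {a : ℤ → M} (ha : a.HasFiniteSupport) :
    HasFiniteSupport fun x : ℕ × ℕ => a (-1 - (x.1 : ℤ) - x.2) := by
  convert hasFiniteSupport_hankel (ha.comp_of_injective neg_injective) using 3 with x
  simp only [comp_apply]
  ring_nf

theorem eq_zero_of_hasFiniteSupport_toeplitz {c : ℤ → M}
    (hc : HasFiniteSupport fun x : ℕ × ℕ => c ((x.1 : ℤ) - x.2)) : c = 0 := by
  funext n
  by_contra hn
  rw [Pi.zero_apply] at hn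
  refine Set.infinite_of_injective_forall_mem (α := ℕ)
    (f := fun m => (n.toNat + m, (-n).toNat + m)) (fun m m' h => by simpa using h) (fun m => ?_) hc
  simp only [mem_support]
  convert hn using 2
  push_cast
  omega

end FiniteSupport

theorem eq_and_eq_of_toeplitz_add_eq {G : Type*} [AddCommGroup G] {a a' : ℤ → G}
    {p p' : ℕ → ℕ → G} (hp : (uncurry p).HasFiniteSupport) (hp' : (uncurry p').HasFiniteSupport)
    (h : ∀ i j : ℕ, a ((i : ℤ) - j) + p i j = a' ((i : ℤ) - j) + p' i j) : a = a' ∧ p = p' := by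
  have haa' : a = a' := by
    have hdiff : (fun x : ℕ × ℕ => (a - a') ((x.1 : ℤ) - x.2)) = uncurry p' - uncurry p :=
      funext fun x => by
        rw [Pi.sub_apply, Pi.sub_apply, sub_eq_sub_iff_add_eq_add]
        exact (h x.1 x.2).trans (add_comm _ _)
    exact sub_eq_zero.mp (eq_zero_of_hasFiniteSupport_toeplitz (hdiff ▸ hp'.sub hp))
  subst haa'
  exact ⟨rfl, funext₂ fun i j => add_left_cancel (h i j)⟩

/-- The algebraic Toeplitz algebra: matrices `𝖶(a) + p` with `a` a Laurent
polynomial (`𝖶(a)_{i,j} = a(i-j)`) and `p` a matrix with finitely many nonzero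
entries. It is closed under multiplication, with
`(𝖶(a)+p)(𝖶(b)+q) = 𝖶(ab) + (-𝖴⁺⁻(a)𝖴⁻⁺(b) + 𝖶(a)q + p𝖶(b) + pq)`,
the perturbation part is again a finite matrix, and the decomposition
`𝖶(a) + p` is unique; hence the symbol map `𝖶(a)+p ↦ a` is a well-defined
ring homomorphism with kernel the finite matrices. -/
theorem toeplitz_algebra_structure {R : Type*} [Ring R]
    (a b : ℤ → R) (p q : ℕ → ℕ → R)
    (ha : (support a).Finite) (hb : (support b).Finite)
    (hp : Set.Finite (support fun x : ℕ × ℕ => p x.1 x.2))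
    (hq : Set.Finite (support fun x : ℕ × ℕ => q x.1 x.2)) :
    -- product formula
    (∀ i k : ℕ,
      ∑ᶠ j : ℕ, (a ((i : ℤ) - j) + p i j) * (b ((j : ℤ) - k) + q j k) =
        (∑ᶠ j : ℤ, a j * b ((i : ℤ) - k - j)) +
          (-(∑ᶠ j : ℕ, a ((i : ℤ) + 1 + j) * b (-1 - (j : ℤ) - k)) +
            (∑ᶠ j : ℕ, a ((i : ℤ) - j) * q j k) +
            (∑ᶠ j : ℕ, p i j * b ((j : ℤ) - k)) +
            ∑ᶠ j : ℕ, p i j * q j k)) ∧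
    -- the perturbation part of the product is a finite matrix
    Set.Finite (support fun x : ℕ × ℕ =>
      -(∑ᶠ j : ℕ, a ((x.1 : ℤ) + 1 + j) * b (-1 - (j : ℤ) - x.2)) +
        (∑ᶠ j : ℕ, a ((x.1 : ℤ) - j) * q j x.2) +
        (∑ᶠ j : ℕ, p x.1 j * b ((j : ℤ) - x.2)) +
        ∑ᶠ j : ℕ, p x.1 j * q j x.2) ∧
    -- uniqueness of the decomposition `𝖶(a) + p`
    (∀ (a' : ℤ → R) (p' : ℕ → ℕ → R), (support a').Finite →
      Set.Finite (support fun x : ℕ × ℕ => p' x.1 x.2) →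
      (∀ i j : ℕ, a ((i : ℤ) - j) + p i j = a' ((i : ℤ) - j) + p' i j) →
      a = a' ∧ p = p') := by
  refine ⟨fun i k => ?_, ?_, fun a' p' _ hp' h => eq_and_eq_of_toeplitz_add_eq hp hp' h⟩
  · rw [finsum_add_mul_add (hasFiniteSupport_toeplitz_row ha i) (HasFiniteSupport.row hp i),
      toeplitz_mul_toeplitz_apply ha]
    abel
  · have hankel := hasFiniteSupport_finsum_mul_of_left
      (F := fun i j : ℕ => a ((i : ℤ) + 1 + j)) (G := fun j k : ℕ => b (-1 - (j : ℤ) - k))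
      (hasFiniteSupport_hankel ha) (HasFiniteSupport.row (hasFiniteSupport_hankel_neg hb))
    have toeplitz_q := hasFiniteSupport_finsum_mul_of_right (hasFiniteSupport_toeplitz_col ha) hq
    have p_toeplitz := hasFiniteSupport_finsum_mul_of_left hp (hasFiniteSupport_toeplitz_row hb)
    have p_q := hasFiniteSupport_finsum_mul_of_left hp (HasFiniteSupport.row hq)
    exact ((hankel.neg.add toeplitz_q).add p_toeplitz).add p_q
end

section
/- Every element of the algebraic Toeplitz algebra $\mathcal T$ (finite matrices plus Toeplitz matrices of Laurent polynomials, over a unital ring $R$) can be written uniquely as a finite sum $\sum_{n,m\in\mathbb N} c_{n,m}\,\mathsf W(z)^n\,\mathsf W(z^{-1})^m$ with $c_{n,m}\in R$ and only finitely many $c_{n,m}$ nonzero; here $\mathsf W(z)$ is the unilateral forward shift and $\mathsf W(z^{-1})$ its transpose, satisfying the bicyclic relation $\mathsf W(z^{-1})\mathsf W(z)=1$. -/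
/-!
The `(i, j)` entry of `∑ c_{n,m} 𝖶(z)ⁿ 𝖶(z⁻¹)ᵐ` is the sum of `c` along the diagonal through
`(i, j)`, from `(i, j)` down to the boundary row or column. Summation along diagonals is
inverted by the diagonal difference `c (n, m) = M n m - M (n - 1) (m - 1)` (with `M` read as `0`
off `ℕ × ℕ`), which gives existence and uniqueness at once. Finiteness of `c`: the difference
is additive, a Toeplitz matrix `a (i - j)` only contributes on the boundary (one entry per
nonzero `a d`), and a finitely supported matrix only at its support and the support shifted by
`(1, 1)`.
-/

open Function

open Finset in
def diagSum {R : Type*} [AddCommMonoid R] (c : ℕ × ℕ → R) (i j : ℕ) : R :=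
  ∑ k ∈ range (min i j + 1), c (i - k, j - k)

def diagDiff {R : Type*} [AddCommGroup R] (M : ℕ → ℕ → R) : ℕ × ℕ → R
  | (n + 1, m + 1) => M (n + 1) (m + 1) - M n m
  | (n, m) => M n m

section diagSum

variable {R : Type*} [AddCommMonoid R] (c : ℕ × ℕ → R)

@[simp]
lemma diagSum_zero_left (j : ℕ) : diagSum c 0 j = c (0, j) := by
  simp [diagSum]

@[simp]
lemma diagSum_zero_right (i : ℕ) : diagSum c i 0 = c (i, 0) := by
  simp [diagSum]

lemma diagSum_succ_succ (i j : ℕ) :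
    diagSum c (i + 1) (j + 1) = c (i + 1, j + 1) + diagSum c i j := by
  rw [diagSum, Nat.add_min_add_right, Finset.sum_range_succ', add_comm]
  simp [diagSum]

end diagSum

section diagDiff

variable {R : Type*} [AddCommGroup R]

@[simp]
lemma diagDiff_zero_left (M : ℕ → ℕ → R) (m : ℕ) : diagDiff M (0, m) = M 0 m := by
  simp [diagDiff]

@[simp]
lemma diagDiff_zero_right (M : ℕ → ℕ → R) (n : ℕ) : diagDiff M (n, 0) = M n 0 := by
  cases n <;> simp [diagDiff]

@[simp]
lemma diagDiff_succ_succ (M : ℕ → ℕ → R) (n m : ℕ) :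
    diagDiff M (n + 1, m + 1) = M (n + 1) (m + 1) - M n m := rfl

lemma diagDiff_add (M N : ℕ → ℕ → R) : diagDiff (M + N) = diagDiff M + diagDiff N := by
  ext ⟨_ | n, _ | m⟩ <;> simp [add_sub_add_comm]

lemma diagSum_diagDiff (M : ℕ → ℕ → R) : diagSum (diagDiff M) = M := by
  ext i j
  induction i generalizing j with
  | zero => simp
  | succ i ih =>
    cases j with
    | zero => simp
    | succ j => rw [diagSum_succ_succ, ih, diagDiff_succ_succ, sub_add_cancel]

lemma diagDiff_diagSum (c : ℕ × ℕ → R) : diagDiff (diagSum c) = c := by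
  ext ⟨_ | n, _ | m⟩ <;> simp [diagSum_succ_succ]

/-- `(d.toNat, (-d).toNat)` is where the diagonal `i - j = d` meets the boundary. -/
lemma support_diagDiff_toeplitz (a : ℤ → R) :
    support (diagDiff fun i j : ℕ => a (i - j)) ⊆
      (fun d : ℤ => (d.toNat, (-d).toNat)) '' support a := by
  rintro ⟨_ | n, _ | m⟩ h
  · exact ⟨0, by simpa using h, rfl⟩
  · exact ⟨-(m + 1 : ℕ), by simpa using h, by simp⟩
  · exact ⟨(n + 1 : ℕ), by simpa using h, by simp⟩
  · simp at h

lemma support_diagDiff_subset (E : ℕ → ℕ → R) :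
    support (diagDiff E) ⊆
      support (uncurry E) ∪ Prod.map Nat.succ Nat.succ '' support (uncurry E) := by
  rintro ⟨_ | n, _ | m⟩ h
  · exact .inl (by simpa using h)
  · exact .inl (by simpa using h)
  · exact .inl (by simpa using h)
  · by_cases h' : E (n + 1) (m + 1) = 0
    · refine .inr ⟨(n, m), by simpa [h'] using h, rfl⟩
    · exact .inl h'

lemma finite_support_diagDiff {M : ℕ → ℕ → R} {a : ℤ → R} (ha : (support a).Finite)
    (hE : (support fun x : ℕ × ℕ => M x.1 x.2 - a ((x.1 : ℤ) - x.2)).Finite) :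
    (support (diagDiff M)).Finite := by
  have hM : M = (fun i j : ℕ => a (i - j)) + fun i j => M i j - a (i - j) := by
    ext i j
    simp
  rw [hM, diagDiff_add]
  exact ((ha.image _).union (hE.union (hE.image _))).subset <| (support_add _ _).trans <|
    Set.union_subset_union (support_diagDiff_toeplitz a) (support_diagDiff_subset _)

end diagDiff

lemma finsum_mul_bicyclic_eq_diagSum {R : Type*} [NonAssocSemiring R] (c : ℕ × ℕ → R)
    (i j : ℕ) :
    ∑ᶠ nm : ℕ × ℕ, c nm *
      (if nm.1 ≤ i ∧ nm.2 ≤ j ∧ (i : ℤ) - nm.1 = (j : ℤ) - nm.2 then 1 else 0) =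
      diagSum c i j := by
  set S := (Finset.range (min i j + 1)).image fun k => (i - k, j - k)
  have hS : ∀ nm : ℕ × ℕ,
      (nm.1 ≤ i ∧ nm.2 ≤ j ∧ (i : ℤ) - nm.1 = (j : ℤ) - nm.2) ↔ nm ∈ S := by
    rintro ⟨n, m⟩
    simp only [S, Finset.mem_image, Finset.mem_range, Prod.mk.injEq]
    constructor
    · rintro ⟨hn, hm, hd⟩
      exact ⟨i - n, by omega, by omega, by omega⟩
    · rintro ⟨k, hk, rfl, rfl⟩
      omega
  have hinj : Set.InjOn (fun k => (i - k, j - k)) (Finset.range (min i j + 1)) := by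
    intro k hk l hl h
    simp only [Finset.coe_range, Set.mem_Iio, Prod.mk.injEq] at hk hl h
    omega
  simp_rw [mul_ite, mul_one, mul_zero, hS, ← finsum_eq_if]
  rw [finsum_mem_finset_eq_sum, Finset.sum_image hinj, diagSum]

/-- Every element of the algebraic Toeplitz algebra (a Toeplitz matrix
`𝖶(a)_{i,j} = a(i-j)` of a Laurent polynomial plus a finite matrix) is uniquely
a finite sum `∑_{n,m} c_{n,m} 𝖶(z)ⁿ 𝖶(z⁻¹)ᵐ`, where `𝖶(z)ⁿ𝖶(z⁻¹)ᵐ` has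
`(i,j)` entry `1` iff `n ≤ i`, `m ≤ j` and `i - n = j - m`. -/
theorem toeplitz_bicyclic_basis {R : Type*} [Ring R] (M : ℕ → ℕ → R)
    (hM : ∃ a : ℤ → R, (support a).Finite ∧
      Set.Finite (support fun x : ℕ × ℕ => M x.1 x.2 - a ((x.1 : ℤ) - x.2))) :
    ∃! c : ℕ × ℕ → R,
      (support c).Finite ∧
      ∀ i j : ℕ, M i j =
        ∑ᶠ nm : ℕ × ℕ, c nm *
          (if nm.1 ≤ i ∧ nm.2 ≤ j ∧ (i : ℤ) - nm.1 = (j : ℤ) - nm.2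
            then 1 else 0) := by
  obtain ⟨a, ha, hE⟩ := hM
  refine ⟨diagDiff M, ⟨finite_support_diagDiff ha hE, fun i j => ?_⟩, ?_⟩
  · rw [finsum_mul_bicyclic_eq_diagSum, diagSum_diagDiff]
  · rintro c ⟨-, hc⟩
    have hM : diagSum c = M := by
      ext i j
      rw [hc, finsum_mul_bicyclic_eq_diagSum]
    rw [← hM, diagDiff_diagSum]
end
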